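/- Example 1 correlated-noise claim: let k > 0, let γ₂ be a standard-scale Laplace random variable with scale σ = max{1, 1/k}·μ/ε, and set γ₁ = k γ₂. Consider the mechanism M(x₁,x₂) = (x₁ + γ₁, x₂ + γ₂) restricted to inputs on the line C = {(x₁,x₂) : x₁ − k x₂ = b}. Then for any two inputs (x₁,x₂), (x₁',x₂') ∈ C with |x₁ − x₁'| ≤ μ and x₂ − x₂' = (x₁ − x₁')/k (or symmetrically |x₂ − x₂'| ≤ μ), and any measurable R ⊆ ℝ², ℙ(M(x) ∈ R) ≤ e^ε ℙ(M(x') ∈ R). -/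
import Mathlib


open MeasureTheory

/-- The Laplace distribution `L(0,σ)` on `ℝ`, with density `(1/(2σ)) e^{−|t|/σ}`. -/
noncomputable def laplaceMeasure (σ : ℝ) : Measure ℝ :=
  volume.withDensity fun t => ENNReal.ofReal ((2 * σ)⁻¹ * Real.exp (-|t| / σ))

/-- Example 1, correlated-noise claim: with `γ₂ ~ L(0,σ)`, `σ = max{1,1/k}·μ/ε`, and
`γ₁ = k γ₂`, the mechanism `M(x₁,x₂) = (x₁ + γ₁, x₂ + γ₂)` restricted to the line
`x₁ − k x₂ = b` is `(ε,0)`-differentially private under manifold `μ`-adjacency. -/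
theorem correlated_laplace_line_dp
    (k μ ε b : ℝ) (hk : 0 < k) (hμ : 0 < μ) (hε : 0 < ε)
    (σ : ℝ) (hσ : σ = max 1 (1 / k) * μ / ε)
    (x₁ x₂ x₁' x₂' : ℝ)
    (hline : x₁ - k * x₂ = b) (hline' : x₁' - k * x₂' = b)
    (hadj : (|x₁ - x₁'| ≤ μ ∧ x₂ - x₂' = (x₁ - x₁') / k) ∨
            (|x₂ - x₂'| ≤ μ ∧ x₁ - x₁' = k * (x₂ - x₂'))) :
    ∀ R : Set (ℝ × ℝ), MeasurableSet R →
      laplaceMeasure σ {γ | (x₁ + k * γ, x₂ + γ) ∈ R} ≤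
        ENNReal.ofReal (Real.exp ε) *
          laplaceMeasure σ {γ | (x₁' + k * γ, x₂' + γ) ∈ R} := by
  intro R hR
  have hmax : (0:ℝ) < max 1 (1/k) := lt_of_lt_of_le one_pos (le_max_left _ _)
  have hσpos : 0 < σ := by rw [hσ]; positivity
  set d : ℝ := x₂' - x₂ with hd
  have hkd : x₁ - x₁' = k * (x₂ - x₂') := by
    rcases hadj with ⟨_, h⟩ | ⟨_, h⟩
    · rw [h]; field_simp
    · exact h
  -- bound on the shift
  have hdle : |d| ≤ σ * ε := by
    have hσε : σ * ε = max 1 (1/k) * μ := by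
      rw [hσ]; field_simp
    rcases hadj with ⟨h1, h2⟩ | ⟨h1, h2⟩
    · have : |d| = |x₁ - x₁'| / k := by
        rw [hd, abs_sub_comm, h2, abs_div, abs_of_pos hk]
      rw [this, hσε]
      calc |x₁ - x₁'| / k ≤ μ / k := by
            gcongr
          _ = (1/k) * μ := by ring
          _ ≤ max 1 (1/k) * μ := by
            apply mul_le_mul_of_nonneg_right (le_max_right _ _) hμ.le
    · have : |d| = |x₂ - x₂'| := by rw [hd, abs_sub_comm]
      rw [this, hσε]
      calc |x₂ - x₂'| ≤ μ := h1
        _ = 1 * μ := (one_mul μ).symm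
        _ ≤ max 1 (1/k) * μ := mul_le_mul_of_nonneg_right (le_max_left _ _) hμ.le
  -- set identification
  have hset : {γ : ℝ | (x₁ + k * γ, x₂ + γ) ∈ R}
      = (fun t => t - d) ⁻¹' {γ : ℝ | (x₁' + k * γ, x₂' + γ) ∈ R} := by
    ext γ
    simp only [Set.mem_preimage, Set.mem_setOf_eq]
    have e1 : x₁' + k * (γ - d) = x₁ + k * γ := by
      rw [hd]; linear_combination -hkd
    have e2 : x₂' + (γ - d) = x₂ + γ := by rw [hd]; ring
    rw [e1, e2]
  set f : ℝ → ENNReal := fun t => ENNReal.ofReal ((2 * σ)⁻¹ * Real.exp (-|t| / σ)) with hf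
  have hfm : Measurable f := by
    apply Measurable.ennreal_ofReal
    fun_prop
  have hS' : MeasurableSet {γ : ℝ | (x₁' + k * γ, x₂' + γ) ∈ R} := by
    have : Measurable fun γ : ℝ => (x₁' + k * γ, x₂' + γ) := by fun_prop
    exact this hR
  have hS : MeasurableSet {γ : ℝ | (x₁ + k * γ, x₂ + γ) ∈ R} := by
    have : Measurable fun γ : ℝ => (x₁ + k * γ, x₂ + γ) := by fun_prop
    exact this hR
  unfold laplaceMeasure
  rw [withDensity_apply _ hS, withDensity_apply _ hS', hset]
  have hmap : Measure.map (fun t : ℝ => t - d) volume = volume :=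
    (measurePreserving_sub_right volume d).map_eq
  have hg : Measurable fun y : ℝ => f (y + d) := by fun_prop
  have key : ∫⁻ t in (fun t => t - d) ⁻¹' {γ : ℝ | (x₁' + k * γ, x₂' + γ) ∈ R}, f t
      = ∫⁻ y in {γ : ℝ | (x₁' + k * γ, x₂' + γ) ∈ R}, f (y + d) := by
    conv_rhs => rw [← hmap]
    rw [setLIntegral_map hS' hg (measurable_sub_const d)]
    simp [sub_add_cancel]
  rw [key]
  have hpt : ∀ y : ℝ, f (y + d) ≤ ENNReal.ofReal (Real.exp ε) * f y := by
    intro y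
    rw [hf]
    simp only
    rw [← ENNReal.ofReal_mul (Real.exp_nonneg ε)]
    apply ENNReal.ofReal_le_ofReal
    have h2σ : (0:ℝ) < (2 * σ)⁻¹ := by positivity
    rw [show Real.exp ε * ((2 * σ)⁻¹ * Real.exp (-|y| / σ))
        = (2 * σ)⁻¹ * (Real.exp ε * Real.exp (-|y| / σ)) by ring,
      ← Real.exp_add]
    apply mul_le_mul_of_nonneg_left _ h2σ.le
    apply Real.exp_le_exp.mpr
    rw [div_le_iff₀ hσpos] at *
    have habs : |y| - |y + d| ≤ |d| := by
      have := abs_sub_abs_le_abs_sub y (y + d)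
      simpa [abs_sub_comm] using this
    have : -|y + d| ≤ -|y| + σ * ε := by nlinarith
    calc -|y + d| ≤ -|y| + σ * ε := this
      _ = (ε + -|y| / σ) * σ := by field_simp; ring
  calc ∫⁻ y in {γ : ℝ | (x₁' + k * γ, x₂' + γ) ∈ R}, f (y + d)
      ≤ ∫⁻ y in {γ : ℝ | (x₁' + k * γ, x₂' + γ) ∈ R},
          ENNReal.ofReal (Real.exp ε) * f y :=
        lintegral_mono fun y => hpt y
    _ = ENNReal.ofReal (Real.exp ε) * ∫⁻ y in {γ : ℝ | (x₁' + k * γ, x₂' + γ) ∈ R}, f y :=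
        lintegral_const_mul _ hfm
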